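/- arXiv:1409.0732 — 5 statements merged into one kernel-verified Lean document; each statement's English description precedes it below -/
import Mathlib

section
/- Let X be an ℝ^d-valued random variable with E|X|^p < ∞ for some p ∈ (0,∞), and let a^{(N)} ⊂ ℝ^d be any finite set. If μ = law(X) is not supported in a^{(N)}, then there exists ξ* ∈ ℝ^d such that E[min(d(X, a^{(N)}), |X - ξ*|)^p] < E[d(X, a^{(N)})^p]. -/
/-!
Off the grid, points `ξ` close enough to `x` satisfy `‖x - ξ‖ < d(x, Γ)`. Covering `Γᶜ` by the
countably many open sets `{x | ‖x - ξ‖ < d(x, Γ)}` with `ξ` in a countable dense set, one of them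
has positive `law(X)`-measure; adding that `ξ` to the grid strictly lowers the error on it.
-/

open MeasureTheory Metric Set

theorem exists_measure_setOf_dist_lt_infDist_ne_zero {α : Type*} [PseudoMetricSpace α]
    [TopologicalSpace.SeparableSpace α] [MeasurableSpace α] (μ : Measure α) (s : Set α)
    (h : μ {x | 0 < infDist x s} ≠ 0) : ∃ ξ, μ {x | dist x ξ < infDist x s} ≠ 0 := by
  obtain ⟨D, hDc, hD⟩ := TopologicalSpace.exists_countable_dense α
  by_contra! h0
  refine h (measure_mono_null (fun x hx => ?_) ((measure_biUnion_null_iff hDc).2 fun ξ _ => h0 ξ))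
  obtain ⟨ξ, hξD, hξ⟩ := hD.exists_dist_lt x hx
  exact mem_biUnion hξD hξ

section Integrals

variable {Ω : Type*} [MeasurableSpace Ω] {P : Measure Ω}

theorem integral_lt_integral_of_ae_le_of_measure_setOf_lt_ne_zero {f g : Ω → ℝ}
    (hf : Integrable f P) (hg : Integrable g P) (hfg : f ≤ᵐ[P] g)
    (hlt : P {ω | f ω < g ω} ≠ 0) : ∫ ω, f ω ∂P < ∫ ω, g ω ∂P := by
  have hpos : 0 < ∫ ω, (g ω - f ω) ∂P := by
    rw [integral_pos_iff_support_of_nonneg_ae (hfg.mono fun ω h => sub_nonneg.2 h) (hg.sub hf)]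
    exact (pos_iff_ne_zero.2 hlt).trans_le
      (measure_mono fun ω (hω : f ω < g ω) => sub_ne_zero.2 hω.ne')
  rw [integral_sub hg hf] at hpos
  linarith

theorem integral_rpow_min_lt_integral_rpow {Y Z : Ω → ℝ} {p : ℝ} (hp : 0 < p)
    (hY0 : ∀ ω, 0 ≤ Y ω) (hZ0 : ∀ ω, 0 ≤ Z ω) (hY : AEMeasurable Y P)
    (hZ : AEMeasurable Z P) (hYp : Integrable (fun ω => Y ω ^ p) P)
    (hlt : P {ω | Z ω < Y ω} ≠ 0) :
    ∫ ω, min (Y ω) (Z ω) ^ p ∂P < ∫ ω, Y ω ^ p ∂P := by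
  have hle : ∀ ω, min (Y ω) (Z ω) ^ p ≤ Y ω ^ p := fun ω =>
    Real.rpow_le_rpow (le_min (hY0 ω) (hZ0 ω)) (min_le_left _ _) hp.le
  have hmin : Integrable (fun ω => min (Y ω) (Z ω) ^ p) P := by
    refine hYp.mono' ((hY.min hZ).pow_const p).aestronglyMeasurable (ae_of_all _ fun ω => ?_)
    rw [Real.norm_of_nonneg (Real.rpow_nonneg (le_min (hY0 ω) (hZ0 ω)) p)]
    exact hle ω
  refine integral_lt_integral_of_ae_le_of_measure_setOf_lt_ne_zero hmin hYp (ae_of_all _ hle)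
    (fun h => hlt (measure_mono_null (fun ω (hω : Z ω < Y ω) => ?_) h))
  exact Real.rpow_lt_rpow (le_min (hY0 ω) (hZ0 ω)) ((min_le_right _ _).trans_lt hω) hp

theorem integrable_infDist_rpow [IsFiniteMeasure P] {E : Type*} [NormedAddCommGroup E]
    {X : Ω → E} (hX : AEStronglyMeasurable X P) {p : ℝ} (hp : 0 < p)
    (hLp : Integrable (fun ω => ‖X ω‖ ^ p) P) {s : Set E} (hs : s.Nonempty) :
    Integrable (fun ω => infDist (X ω) s ^ p) P := by
  obtain ⟨a, ha⟩ := hs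
  have hp' : ENNReal.ofReal p ≠ 0 := by simpa using hp
  have hXp : MemLp X (ENNReal.ofReal p) P :=
    (integrable_norm_rpow_iff hX hp' ENNReal.ofReal_ne_top).1
      (by rwa [ENNReal.toReal_ofReal hp.le])
  have hdist : MemLp (fun ω => infDist (X ω) s) (ENNReal.ofReal p) P :=
    (hXp.sub (memLp_const a)).mono ((continuous_infDist_pt s).comp_aestronglyMeasurable hX)
      (ae_of_all _ fun ω => by
        rw [Real.norm_of_nonneg infDist_nonneg, Pi.sub_apply, ← dist_eq_norm]
        exact infDist_le_dist_of_mem ha)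
  simpa only [Real.norm_of_nonneg infDist_nonneg, ENNReal.toReal_ofReal hp.le] using
    hdist.integrable_norm_rpow hp' ENNReal.ofReal_ne_top

end Integrals

theorem stmt_1 {E : Type*} [NormedAddCommGroup E] [NormedSpace ℝ E] [FiniteDimensional ℝ E]
    [MeasurableSpace E] [BorelSpace E]
    {Ω : Type*} [MeasurableSpace Ω] (P : Measure Ω) [IsProbabilityMeasure P]
    (X : Ω → E) (hX : Measurable X) (p : ℝ) (hp : 0 < p)
    (hLp : Integrable (fun ω => ‖X ω‖ ^ p) P)
    (Γ : Finset E) (hΓ : Γ.Nonempty)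
    (hsupp : 0 < Measure.map X P ((↑Γ : Set E)ᶜ)) :
    ∃ ξ : E, ∫ ω, (min (infDist (X ω) ↑Γ) ‖X ω - ξ‖) ^ p ∂P
      < ∫ ω, infDist (X ω) (↑Γ : Set E) ^ p ∂P := by
  have hΓc : (Γ : Set E)ᶜ ⊆ {x | 0 < infDist x Γ} := fun x hx =>
    (Γ.finite_toSet.isClosed.notMem_iff_infDist_pos hΓ).1 hx
  obtain ⟨ξ, hξ⟩ := exists_measure_setOf_dist_lt_infDist_ne_zero (P.map X) Γ
    (hsupp.trans_le (measure_mono hΓc)).ne'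
  have hopen : IsOpen {x | dist x ξ < infDist x Γ} :=
    isOpen_lt (continuous_id.dist continuous_const) (continuous_infDist_pt _)
  rw [Measure.map_apply hX hopen.measurableSet] at hξ
  refine ⟨ξ, integral_rpow_min_lt_integral_rpow hp (fun _ => infDist_nonneg)
    (fun _ => norm_nonneg _) ((continuous_infDist_pt _).measurable.comp hX).aemeasurable
    (hX.sub_const ξ).norm.aemeasurable
    (integrable_infDist_rpow hX.aestronglyMeasurable hp hLp hΓ) ?_⟩
  simpa only [preimage_ofPred_eq, dist_eq_norm] using hξ
end

section
/- Let X ∈ L^p(ℝ^d), p ∈ (0,∞), with law μ whose support contains at least N+1 points, and let (a_k)_{k≥1} be an L^p-optimal greedy quantization sequence. Then e_p(a^{(N+1)}, X) < e_p(a^{(N)}, X); in particular a_{N+1} ∉ {a_1,...,a_N}. -/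
open MeasureTheory Metric

/-- The grid `{a 1, ..., a N}` formed by the first `N` terms of the sequence `a`. -/
def grid {E : Type*} (a : ℕ → E) (N : ℕ) : Set E := a '' Set.Icc 1 N

/-- `a` is an `L^p`-optimal greedy quantization sequence for `X`:
`a (N+1)` minimizes `ξ ↦ ∫ d(X, a^{(N)} ∪ {ξ})^p dP`. -/
def IsGreedy {E : Type*} [NormedAddCommGroup E] [MeasurableSpace E]
    {Ω : Type*} [MeasurableSpace Ω] (P : Measure Ω) (X : Ω → E) (p : ℝ) (a : ℕ → E) : Prop :=
  ∀ N : ℕ, ∀ ξ : E,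
    ∫ ω, infDist (X ω) (insert (a (N + 1)) (grid a N)) ^ p ∂P
      ≤ ∫ ω, infDist (X ω) (insert ξ (grid a N)) ^ p ∂P

/-!
Let `Γ = {a 1, …, a N}`. The law of `X` charges `Γᶜ`, which is covered by the countably many
open sets `{x | dist x ξ < infDist x Γ}` with `ξ` in a countable dense set, so one of them has
positive mass. Adding that `ξ` to `Γ` strictly lowers `E[d(X, Γ)^p]`, and the greedy point
`a (N + 1)` does at least as well as `ξ`. If `a (N + 1)` were in `Γ`, adding it would change
nothing, contradicting the strict decrease.
-/
section Grid

variable {E : Type*} (a : ℕ → E)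

theorem grid_succ (N : ℕ) : grid a (N + 1) = insert (a (N + 1)) (grid a N) := by
  rw [grid, grid, ← Set.image_insert_eq,
    Set.insert_Icc_right_eq_Icc_add_one (Nat.le_add_left 1 N)]

theorem grid_finite (N : ℕ) : (grid a N).Finite := (Set.finite_Icc 1 N).image a

theorem grid_nonempty {N : ℕ} (hN : 1 ≤ N) : (grid a N).Nonempty :=
  ⟨a 1, 1, ⟨le_rfl, hN⟩, rfl⟩

theorem exists_finset_card_le_coe_eq_grid (N : ℕ) :
    ∃ S : Finset E, S.card ≤ N ∧ (S : Set E) = grid a N := by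
  classical
  refine ⟨(Finset.Icc 1 N).image a, Finset.card_image_le.trans (by simp), ?_⟩
  rw [Finset.coe_image, Finset.coe_Icc, grid]

end Grid

namespace GreedyQuantization

variable {α : Type*} [MeasurableSpace α] {μ : Measure α}

theorem integral_lt_integral_of_le_of_measure_setOf_lt_ne_zero {f g : α → ℝ}
    (hf : Integrable f μ) (hg : Integrable g μ) (hle : ∀ x, f x ≤ g x)
    (hlt : μ {x | f x < g x} ≠ 0) : ∫ x, f x ∂μ < ∫ x, g x ∂μ := by
  have hsupport : Function.support (fun x => g x - f x) = {x | f x < g x} := by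
    ext x; simp [sub_ne_zero, (hle x).lt_iff_ne, eq_comm]
  have hpos : 0 < ∫ x, (g x - f x) ∂μ := by
    rw [integral_pos_iff_support_of_nonneg (fun x => sub_nonneg.2 (hle x)) (hg.sub hf),
      hsupport]
    exact pos_iff_ne_zero.2 hlt
  rw [integral_sub hg hf] at hpos
  linarith

theorem exists_measure_dist_lt_infDist_ne_zero {E : Type*} [PseudoMetricSpace E]
    [TopologicalSpace.SeparableSpace E] {X : α → E} {Γ : Set E} (hΓ : IsClosed Γ)
    (hΓne : Γ.Nonempty) (hX : μ (X ⁻¹' Γᶜ) ≠ 0) :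
    ∃ ξ, μ {x | dist (X x) ξ < infDist (X x) Γ} ≠ 0 := by
  obtain ⟨s, hs, hsdense⟩ := TopologicalSpace.exists_countable_dense E
  by_contra! hnull
  refine hX (measure_mono_null (fun x hx => ?_)
    ((measure_biUnion_null_iff hs).2 fun z _ => hnull z))
  obtain ⟨z, hz, hdist⟩ :=
    hsdense.exists_dist_lt (X x) ((hΓ.notMem_iff_infDist_pos hΓne).1 hx)
  exact Set.mem_biUnion hz hdist

section Normed

variable {E : Type*} [NormedAddCommGroup E]

theorem integrable_infDist_rpow [IsFiniteMeasure μ] {X : α → E}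
    (hX : AEStronglyMeasurable X μ) {p : ℝ} (hp : 0 < p)
    (hLp : Integrable (fun x => ‖X x‖ ^ p) μ) {s : Set E} (hs : s.Nonempty) :
    Integrable (fun x => infDist (X x) s ^ p) μ := by
  obtain ⟨c, hc⟩ := hs
  have hpE : ENNReal.ofReal p ≠ 0 := by simpa using hp
  have hXp : MemLp X (ENNReal.ofReal p) μ := by
    rw [← integrable_norm_rpow_iff hX hpE ENNReal.ofReal_ne_top,
      ENNReal.toReal_ofReal hp.le]
    exact hLp
  have hdist : MemLp (fun x => infDist (X x) s) (ENNReal.ofReal p) μ := by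
    refine (hXp.sub (memLp_const c)).of_le
      ((continuous_infDist_pt s).comp_aestronglyMeasurable hX)
      (Filter.Eventually.of_forall fun x => ?_)
    rw [Real.norm_of_nonneg infDist_nonneg, Pi.sub_apply, ← dist_eq_norm]
    exact infDist_le_dist_of_mem hc
  simpa [Real.norm_of_nonneg infDist_nonneg, ENNReal.toReal_ofReal hp.le] using
    hdist.integrable_norm_rpow hpE ENNReal.ofReal_ne_top

theorem integral_infDist_rpow_insert_lt [IsFiniteMeasure μ] {X : α → E}
    (hX : AEStronglyMeasurable X μ) {p : ℝ} (hp : 0 < p)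
    (hLp : Integrable (fun x => ‖X x‖ ^ p) μ) {Γ : Set E} (hΓ : Γ.Nonempty) {ξ : E}
    (hξ : μ {x | dist (X x) ξ < infDist (X x) Γ} ≠ 0) :
    ∫ x, infDist (X x) (insert ξ Γ) ^ p ∂μ < ∫ x, infDist (X x) Γ ^ p ∂μ := by
  refine integral_lt_integral_of_le_of_measure_setOf_lt_ne_zero
    (integrable_infDist_rpow hX hp hLp (Set.insert_nonempty ξ Γ))
    (integrable_infDist_rpow hX hp hLp hΓ)
    (fun x => Real.rpow_le_rpow infDist_nonneg
      (infDist_le_infDist_of_subset (Set.subset_insert ξ Γ) hΓ) hp.le)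
    fun hnull => hξ (measure_mono_null (fun x hx => ?_) hnull)
  exact Real.rpow_lt_rpow infDist_nonneg
    ((infDist_le_dist_of_mem (Set.mem_insert ξ Γ)).trans_lt hx) hp

end Normed

end GreedyQuantization

open GreedyQuantization

theorem stmt_3 {E : Type*} [NormedAddCommGroup E] [NormedSpace ℝ E] [FiniteDimensional ℝ E]
    [MeasurableSpace E] [BorelSpace E]
    {Ω : Type*} [MeasurableSpace Ω] (P : Measure Ω) [IsProbabilityMeasure P]
    (X : Ω → E) (hX : Measurable X) (p : ℝ) (hp : 0 < p)
    (hLp : Integrable (fun ω => ‖X ω‖ ^ p) P)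
    (a : ℕ → E) (ha : IsGreedy P X p a) (N : ℕ) (hN : 1 ≤ N)
    (hsupp : ∀ S : Finset E, S.card ≤ N → 0 < Measure.map X P ((↑S : Set E)ᶜ)) :
    (∫ ω, infDist (X ω) (grid a (N + 1)) ^ p ∂P) ^ (1 / p)
      < (∫ ω, infDist (X ω) (grid a N) ^ p ∂P) ^ (1 / p) ∧
    a (N + 1) ∉ grid a N := by
  have hclosed : IsClosed (grid a N) := (grid_finite a N).isClosed
  have hmass : P (X ⁻¹' (grid a N)ᶜ) ≠ 0 := by
    obtain ⟨S, hcard, hS⟩ := exists_finset_card_le_coe_eq_grid a N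
    rw [← Measure.map_apply hX hclosed.measurableSet.compl, ← hS]
    exact (hsupp S hcard).ne'
  obtain ⟨ξ, hξ⟩ := exists_measure_dist_lt_infDist_ne_zero hclosed (grid_nonempty a hN) hmass
  have hdecrease : ∫ ω, infDist (X ω) (grid a (N + 1)) ^ p ∂P
      < ∫ ω, infDist (X ω) (grid a N) ^ p ∂P := by
    rw [grid_succ]
    exact (ha N ξ).trans_lt (integral_infDist_rpow_insert_lt hX.aestronglyMeasurable hp hLp
      (grid_nonempty a hN) hξ)
  refine ⟨Real.rpow_lt_rpow (integral_nonneg fun ω => Real.rpow_nonneg infDist_nonneg p)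
    hdecrease (by positivity), fun hmem => ?_⟩
  rw [grid_succ, Set.insert_eq_of_mem hmem] at hdecrease
  exact hdecrease.false
end

section
/- For any N-tuple (ξ_1,...,ξ_N) of points in [0,1] and X uniformly distributed on [0,1], the L^1 mean quantization error satisfies e_1({ξ_1,...,ξ_N}, X) = ∫_0^1 min_{1≤i≤N}|u - ξ_i| du ≤ D*_N(ξ_1,...,ξ_N), where D*_N is the star discrepancy. -/
open MeasureTheory Metric
open scoped Classical

/-!
Let `F` be the empirical distribution function of the points and `D` their star discrepancy, so
that `|F v - v| ≤ D` on `[0,1]`. If `d` is the distance from `u` to the nearest point, no point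
lies in `(u - d, u + d)`, so `F` is constant on `[u - d, u + d)`; a constant cannot stay within `D`
of the identity on an interval of length `2d` unless `d ≤ D`. Near `0` or `1` the interval is cut
off, but there `F` is `0` resp. `1`, which gives the same bound. Hence the integrand is at most `D`
everywhere on `[0,1]`, a set of measure `1`.
-/

/-- The star discrepancy of the points `ξ 0, ..., ξ (N-1)` in `[0,1]`. -/
noncomputable def starDisc (N : ℕ) (ξ : Fin N → ℝ) : ℝ :=
  ⨆ u : Set.Icc (0 : ℝ) 1,
    |(N : ℝ)⁻¹ * ((Finset.univ.filter (fun i : Fin N => ξ i ≤ (u : ℝ))).card : ℝ) - (u : ℝ)|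

noncomputable def empiricalCDF {N : ℕ} (ξ : Fin N → ℝ) (v : ℝ) : ℝ :=
  (N : ℝ)⁻¹ * ((Finset.univ.filter (fun i : Fin N => ξ i ≤ v)).card : ℝ)

section empiricalCDF

variable {N : ℕ} (ξ : Fin N → ℝ) {a b v : ℝ}

theorem empiricalCDF_nonneg : 0 ≤ empiricalCDF ξ v := by
  unfold empiricalCDF; positivity

theorem empiricalCDF_le_one : empiricalCDF ξ v ≤ 1 := by
  unfold empiricalCDF
  rcases N.eq_zero_or_pos with rfl | hN
  · simp
  rw [inv_mul_le_one₀ (by exact_mod_cast hN)]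
  exact_mod_cast (Finset.card_filter_le _ _).trans_eq (Finset.card_fin N)

variable {ξ}

theorem empiricalCDF_eq_zero (h : ∀ i, v < ξ i) : empiricalCDF ξ v = 0 := by
  simp [empiricalCDF, Finset.filter_eq_empty_iff, h]

theorem empiricalCDF_eq_one (hN : 0 < N) (h : ∀ i, ξ i ≤ v) : empiricalCDF ξ v = 1 := by
  simp [empiricalCDF, Finset.filter_true_of_mem, h, hN.ne']

theorem empiricalCDF_eq_of_mem_Ico (hgap : ∀ i, ξ i ∉ Set.Ioo a b) (hv : v ∈ Set.Ico a b) :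
    empiricalCDF ξ v = empiricalCDF ξ a := by
  unfold empiricalCDF
  congr 3
  ext i
  simp only [Finset.mem_filter, Finset.mem_univ, true_and]
  have := hgap i
  simp only [Set.mem_Ioo, not_and, not_lt] at this
  constructor
  · intro hi; by_contra! ha; linarith [this ha, hv.2]
  · intro hi; linarith [hv.1]

end empiricalCDF

section starDisc

variable {N : ℕ} (ξ : Fin N → ℝ) {a b v : ℝ}

theorem starDisc_eq_iSup :
    starDisc N ξ = ⨆ u : Set.Icc (0 : ℝ) 1, |empiricalCDF ξ u - u| := rfl

theorem abs_empiricalCDF_sub_le_starDisc (hv : v ∈ Set.Icc (0 : ℝ) 1) :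
    |empiricalCDF ξ v - v| ≤ starDisc N ξ := by
  rw [starDisc_eq_iSup]
  refine le_ciSup (f := fun u : Set.Icc (0 : ℝ) 1 => |empiricalCDF ξ u - u|)
    ⟨1, ?_⟩ ⟨v, hv⟩
  rintro _ ⟨⟨u, hu⟩, rfl⟩
  have := empiricalCDF_nonneg ξ (v := u)
  have := empiricalCDF_le_one ξ (v := u)
  exact abs_sub_le_iff.2 ⟨by linarith [hu.1], by linarith [hu.2]⟩

theorem starDisc_nonneg : 0 ≤ starDisc N ξ :=
  (abs_nonneg _).trans (abs_empiricalCDF_sub_le_starDisc ξ (v := 0) (by simp))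

variable {ξ}

/-- `F` may jump at `b`, so the bound at `b` comes from the limit `v → b⁻`. -/
theorem sub_empiricalCDF_le_starDisc (ha : 0 ≤ a) (hab : a < b) (hb : b ≤ 1)
    (hgap : ∀ i, ξ i ∉ Set.Ioo a b) : b - empiricalCDF ξ a ≤ starDisc N ξ := by
  rw [sub_le_iff_le_add']
  refine le_of_forall_lt_imp_le_of_dense fun v hvb => ?_
  rcases lt_or_ge v a with hva | hav
  · have := abs_empiricalCDF_sub_le_starDisc ξ ⟨ha, hab.le.trans hb⟩
    linarith [neg_abs_le (empiricalCDF ξ a - a)]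
  · have := abs_empiricalCDF_sub_le_starDisc ξ ⟨ha.trans hav, hvb.le.trans hb⟩
    rw [empiricalCDF_eq_of_mem_Ico hgap ⟨hav, hvb⟩] at this
    linarith [neg_abs_le (empiricalCDF ξ a - v)]

theorem infDist_le_starDisc (hξ : ∀ i, ξ i ∈ Set.Icc (0 : ℝ) 1) {u : ℝ}
    (hu : u ∈ Set.Icc (0 : ℝ) 1) : infDist u (Set.range ξ) ≤ starDisc N ξ := by
  rcases (Set.range ξ).eq_empty_or_nonempty with hempty | ⟨_, i₀, rfl⟩
  · rw [hempty, infDist_empty]; exact starDisc_nonneg ξ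
  rcases (infDist_nonneg : 0 ≤ infDist u (Set.range ξ)).eq_or_lt with hd | hd
  · rw [← hd]; exact starDisc_nonneg ξ
  set d := infDist u (Set.range ξ)
  have hgap : ∀ i, ξ i ∉ Set.Ioo (u - d) (u + d) := fun i hi =>
    notMem_of_dist_lt_infDist (by rwa [← Real.ball_eq_Ioo, mem_ball_comm] at hi)
      (Set.mem_range_self i)
  have hside : ∀ i, ξ i ≤ u - d ∨ u + d ≤ ξ i := fun i => by
    by_contra! h; exact hgap i ⟨h.1, h.2⟩
  obtain ⟨hu0, hu1⟩ := hu
  by_cases hleft : u - d < 0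
  · have hright : ∀ i, u + d ≤ ξ i := fun i =>
      (hside i).resolve_left fun h => by linarith [(hξ i).1]
    have h := sub_empiricalCDF_le_starDisc le_rfl (by linarith) ((hright i₀).trans (hξ i₀).2)
      (fun i hi => hgap i ⟨by linarith [hi.1], hi.2⟩)
    rw [empiricalCDF_eq_zero fun i => by linarith [hright i]] at h
    linarith
  by_cases hright : 1 < u + d
  · have hleft' : ∀ i, ξ i ≤ u - d := fun i =>
      (hside i).resolve_right fun h => by linarith [(hξ i).2]
    have h := abs_empiricalCDF_sub_le_starDisc ξ (v := u - d) ⟨by linarith, by linarith⟩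
    rw [empiricalCDF_eq_one i₀.pos hleft'] at h
    linarith [le_abs_self (1 - (u - d))]
  · have h₁ := sub_empiricalCDF_le_starDisc (not_lt.1 hleft) (by linarith) (not_lt.1 hright) hgap
    have h₂ := abs_empiricalCDF_sub_le_starDisc ξ (v := u - d) ⟨by linarith, by linarith⟩
    linarith [le_abs_self (empiricalCDF ξ (u - d) - (u - d))]

end starDisc

theorem stmt_10_general (N : ℕ) (ξ : Fin N → ℝ)
    (hξ : ∀ i, ξ i ∈ Set.Icc (0 : ℝ) 1) :
    ∫ u in Set.Icc (0 : ℝ) 1, infDist u (Set.range ξ) ≤ starDisc N ξ := by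
  calc ∫ u in Set.Icc (0 : ℝ) 1, infDist u (Set.range ξ)
      ≤ ‖∫ u in Set.Icc (0 : ℝ) 1, infDist u (Set.range ξ)‖ := Real.le_norm_self _
    _ ≤ starDisc N ξ * volume.real (Set.Icc (0 : ℝ) 1) :=
      norm_setIntegral_le_of_norm_le_const (by simp) fun u hu => by
        rw [Real.norm_of_nonneg infDist_nonneg]; exact infDist_le_starDisc hξ hu
    _ = starDisc N ξ := by simp

theorem stmt_10 (N : ℕ) (hN : 0 < N) (ξ : Fin N → ℝ)
    (hξ : ∀ i, ξ i ∈ Set.Icc (0 : ℝ) 1) :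
    ∫ u in Set.Icc (0 : ℝ) 1, infDist u (Set.range ξ) ≤ starDisc N ξ :=
  stmt_10_general N ξ hξ
end

section
/- Let μ be a probability measure on ℝ with log-concave density and finite second moment supported on a compact interval [a,b]. Define Φ(x) = (K_μ((b+x)/2) - K_μ((a+x)/2)) / (F_μ((b+x)/2) - F_μ((a+x)/2)) where F_μ is the CDF and K_μ(x) = ∫_{-∞}^x ξ μ(dξ). Then the Lloyd iteration x_{n+1} = Φ(x_n), started at any x_0 ∈ (a,b), converges to the unique fixed point x* of Φ in (a,b). -/
/-
The Lloyd map `Φ y` is the conditional mean of `μ` on `((a + y) / 2, (b + y) / 2]`, the Voronoi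
cell of `y` among `{a, y, b}`. As `μ` has no atoms and charges every subinterval of `(a, b)`, `Φ` is
continuous and monotone on `[a, b]` and maps it into `(a, b)`, so the iterates form a bounded
monotone sequence converging to a fixed point. Log-concavity of the density makes the likelihood
ratio `φ (· + δ) / φ` non-increasing, so by a Chebyshev-type correlation inequality translating a
cell by `δ` raises its conditional mean by at most `δ`. Hence `Φ z ≤ Φ y + (z - y) / 2` for `y ≤ z`,
which leaves room for only one fixed point.
-/

open MeasureTheory Metric Filter

open Set Real Topology

theorem concaveOn_log_of_rpow_mul_rpow_le {φ : ℝ → ℝ} {s : Set ℝ} (hs : Convex ℝ s)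
    (hpos : ∀ x ∈ s, 0 < φ x)
    (h : ∀ x ∈ s, ∀ y ∈ s, ∀ t ∈ Icc (0 : ℝ) 1,
      φ x ^ t * φ y ^ (1 - t) ≤ φ (t * x + (1 - t) * y)) :
    ConcaveOn ℝ s fun x => log (φ x) := by
  refine ⟨hs, fun x hx y hy p q hp hq hpq => ?_⟩
  obtain rfl : q = 1 - p := by linarith
  have hx' := hpos x hx
  have hy' := hpos y hy
  calc p • log (φ x) + (1 - p) • log (φ y) = log (φ x ^ p * φ y ^ (1 - p)) := by
        rw [log_mul (by positivity) (by positivity), log_rpow hx', log_rpow hy', smul_eq_mul,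
          smul_eq_mul]
    _ ≤ log (φ (p • x + (1 - p) • y)) :=
        log_le_log (by positivity) (h x hx y hy p ⟨hp, by linarith⟩)

theorem continuousOn_of_concaveOn_log {φ : ℝ → ℝ} {s : Set ℝ} (hs : IsOpen s)
    (hpos : ∀ x ∈ s, 0 < φ x) (hconc : ConcaveOn ℝ s fun x => log (φ x)) :
    ContinuousOn φ s :=
  (continuous_exp.comp_continuousOn (hconc.continuousOn hs)).congr fun x hx =>
    (exp_log (hpos x hx)).symm

theorem ConcaveOn.map_add_sub_map_le {f : ℝ → ℝ} {s : Set ℝ} (hf : ConcaveOn ℝ s f)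
    {η ξ δ : ℝ} (hη : η ∈ s) (hξδ : ξ + δ ∈ s) (hηξ : η ≤ ξ) (hδ : 0 ≤ δ) :
    f (ξ + δ) - f ξ ≤ f (η + δ) - f η := by
  rcases hδ.eq_or_lt with rfl | hδ
  · simp
  have hs := hf.1.ordConnected
  have hξ : ξ ∈ s := hs.out hη hξδ ⟨hηξ, by linarith⟩
  have hηδ : η + δ ∈ s := hs.out hη hξδ ⟨by linarith, by linarith⟩
  have h₁ : slope f (ξ + δ) ξ ≤ slope f (ξ + δ) η :=
    hf.slope_anti hξδ ⟨hη, (by linarith : η < ξ + δ).ne⟩ ⟨hξ, (by linarith : ξ < ξ + δ).ne⟩ hηξ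
  have h₂ : slope f η (ξ + δ) ≤ slope f η (η + δ) :=
    hf.slope_anti hη ⟨hηδ, (by linarith : η < η + δ).ne'⟩ ⟨hξδ, (by linarith : η < ξ + δ).ne'⟩
      (by linarith)
  rw [slope_comm f (ξ + δ) η] at h₁
  have := h₁.trans h₂
  rw [slope_comm, slope_def_field, slope_def_field, add_sub_cancel_left, add_sub_cancel_left,
    div_le_div_iff_of_pos_right hδ] at this
  exact this

theorem map_add_mul_le_of_concaveOn_log {φ : ℝ → ℝ} {s : Set ℝ}
    (hconc : ConcaveOn ℝ s fun x => log (φ x)) (hpos : ∀ x ∈ s, 0 < φ x) {η ξ δ : ℝ}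
    (hη : η ∈ s) (hξδ : ξ + δ ∈ s) (hηξ : η ≤ ξ) (hδ : 0 ≤ δ) :
    φ (ξ + δ) * φ η ≤ φ (η + δ) * φ ξ := by
  have hs := hconc.1.ordConnected
  have h₁ := hpos _ hη
  have h₂ := hpos _ hξδ
  have h₃ := hpos _ (hs.out hη hξδ ⟨by linarith, by linarith⟩ : η + δ ∈ s)
  have h₄ := hpos _ (hs.out hη hξδ ⟨hηξ, by linarith⟩ : ξ ∈ s)
  rw [← log_le_log_iff (by positivity) (by positivity), log_mul h₂.ne' h₁.ne',
    log_mul h₃.ne' h₄.ne']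
  linarith [hconc.map_add_sub_map_le hη hξδ hηξ hδ]

theorem withDensity_ofReal_Ioo_pos {φ : ℝ → ℝ} {u v : ℝ} (huv : u < v)
    (hpos : ∀ x ∈ Ioo u v, 0 < φ x) (hcont : ContinuousOn φ (Ioo u v)) :
    0 < volume.withDensity (fun x => ENNReal.ofReal (φ x)) (Ioo u v) := by
  rw [withDensity_apply _ measurableSet_Ioo, pos_iff_ne_zero, Ne,
    setLIntegral_eq_zero_iff' measurableSet_Ioo
      (hcont.aemeasurable measurableSet_Ioo).ennreal_ofReal]
  intro h
  have : volume (Ioo u v) = 0 := measure_eq_zero_iff_ae_notMem.2 <|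
    h.mono fun x hx hxs => (ENNReal.ofReal_pos.2 (hpos x hxs)).ne' (hx hxs)
  simp only [Real.volume_Ioo, ENNReal.ofReal_eq_zero, tsub_nonpos] at this
  linarith

noncomputable def intervalMean (μ : Measure ℝ) (u v : ℝ) : ℝ :=
  (∫ ξ in Ioc u v, ξ ∂μ) / μ.real (Ioc u v)

section IntervalMean

variable {μ : Measure ℝ} {u v c : ℝ}

theorem setIntegral_Ioc_add_Ioc (hid : Integrable (fun ξ : ℝ => ξ) μ) (huc : u ≤ c)
    (hcv : c ≤ v) :
    ∫ ξ in Ioc u v, ξ ∂μ = (∫ ξ in Ioc u c, ξ ∂μ) + ∫ ξ in Ioc c v, ξ ∂μ := by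
  rw [← Ioc_union_Ioc_eq_Ioc huc hcv]
  exact setIntegral_union (Ioc_disjoint_Ioc_of_le le_rfl) measurableSet_Ioc hid.integrableOn
    hid.integrableOn

theorem continuous_setIntegral_Iic [NullSingletonClass μ] {f : ℝ → ℝ} (hf : Integrable f μ) :
    Continuous fun t => ∫ x in Iic t, f x ∂μ := by
  have h : ∀ t, ∫ x in Iic t, f x ∂μ = (∫ x in Iic 0, f x ∂μ) + ∫ x in 0..t, f x ∂μ := fun t => by
    rw [← intervalIntegral.integral_Iic_sub_Iic hf.integrableOn hf.integrableOn,
      add_sub_cancel]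
  exact (continuous_const.add
    (intervalIntegral.continuous_primitive (fun _ _ => hf.intervalIntegrable) 0)).congr
    fun t => (h t).symm

variable [IsFiniteMeasure μ]

theorem mul_measureReal_Ioc_le_setIntegral (hid : Integrable (fun ξ : ℝ => ξ) μ) (u v : ℝ) :
    u * μ.real (Ioc u v) ≤ ∫ ξ in Ioc u v, ξ ∂μ := by
  simpa [mul_comm] using setIntegral_mono_on (integrable_const u).integrableOn hid.integrableOn
    measurableSet_Ioc fun x hx => hx.1.le

theorem setIntegral_Ioc_le_mul_measureReal (hid : Integrable (fun ξ : ℝ => ξ) μ) (u v : ℝ) :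
    ∫ ξ in Ioc u v, ξ ∂μ ≤ v * μ.real (Ioc u v) := by
  simpa [mul_comm] using setIntegral_mono_on hid.integrableOn (integrable_const v).integrableOn
    measurableSet_Ioc fun x hx => hx.2

theorem measureReal_Ioc_pos (h : 0 < μ (Ioc u v)) : 0 < μ.real (Ioc u v) :=
  ENNReal.toReal_pos h.ne' (measure_ne_top _ _)

theorem intervalMean_mem_Icc (hid : Integrable (fun ξ : ℝ => ξ) μ) (hpos : 0 < μ (Ioc u v)) :
    intervalMean μ u v ∈ Icc u v :=
  ⟨(le_div_iff₀ (measureReal_Ioc_pos hpos)).2 (mul_measureReal_Ioc_le_setIntegral hid u v),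
    (div_le_iff₀ (measureReal_Ioc_pos hpos)).2 (setIntegral_Ioc_le_mul_measureReal hid u v)⟩

theorem intervalMean_mem_Ioo [NullSingletonClass μ] (hid : Integrable (fun ξ : ℝ => ξ) μ)
    (hpos : 0 < μ (Ioc u v)) : intervalMean μ u v ∈ Ioo u v := by
  have key : ∀ f : ℝ → ℝ, IntegrableOn f (Ioc u v) μ → (∀ x ∈ Ioc u v, 0 ≤ f x) →
      (∀ x ∈ Ioo u v, 0 < f x) → 0 < ∫ x in Ioc u v, f x ∂μ := by
    intro f hf hf0 hfpos
    rw [setIntegral_pos_iff_support_of_nonneg_ae (ae_restrict_of_forall_mem measurableSet_Ioc hf0)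
      hf, ← measure_congr (Ioo_ae_eq_Ioc (μ := μ))] at *
    exact hpos.trans_le (measure_mono fun x hx => ⟨(hfpos x hx).ne', Ioo_subset_Ioc_self hx⟩)
  have hD := measureReal_Ioc_pos hpos
  have hl := key (fun ξ => ξ - u) (hid.integrableOn.sub (integrable_const u).integrableOn)
    (fun x hx => sub_nonneg.2 hx.1.le) fun x hx => sub_pos.2 hx.1
  have hr := key (fun ξ => v - ξ) ((integrable_const v).integrableOn.sub hid.integrableOn)
    (fun x hx => sub_nonneg.2 hx.2) fun x hx => sub_pos.2 hx.2
  rw [integral_sub hid.integrableOn (integrable_const u).integrableOn, setIntegral_const,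
    smul_eq_mul] at hl
  rw [integral_sub (integrable_const v).integrableOn hid.integrableOn, setIntegral_const,
    smul_eq_mul] at hr
  exact ⟨(lt_div_iff₀ hD).2 (by linarith), (div_lt_iff₀ hD).2 (by linarith)⟩

theorem measureReal_Ioc_add_Ioc (huc : u ≤ c) (hcv : c ≤ v) :
    μ.real (Ioc u v) = μ.real (Ioc u c) + μ.real (Ioc c v) := by
  rw [← Ioc_union_Ioc_eq_Ioc huc hcv]
  exact measureReal_union (Ioc_disjoint_Ioc_of_le le_rfl) measurableSet_Ioc

theorem intervalMean_le_of_le_left (hid : Integrable (fun ξ : ℝ => ξ) μ) (huc : u ≤ c)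
    (hcv : c ≤ v) (hpos : 0 < μ (Ioc c v)) : intervalMean μ u v ≤ intervalMean μ c v := by
  have hL := setIntegral_Ioc_le_mul_measureReal hid u c
  have hR := mul_measureReal_Ioc_le_setIntegral hid c v
  have hDL : 0 ≤ μ.real (Ioc u c) := measureReal_nonneg
  have hDR := measureReal_Ioc_pos hpos
  rw [intervalMean, intervalMean, setIntegral_Ioc_add_Ioc hid huc hcv,
    measureReal_Ioc_add_Ioc huc hcv, div_le_div_iff₀ (by positivity) hDR]
  nlinarith [mul_le_mul_of_nonneg_right hL hDR.le, mul_le_mul_of_nonneg_right hR hDL]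

theorem intervalMean_le_of_le_right (hid : Integrable (fun ξ : ℝ => ξ) μ) (huc : u ≤ c)
    (hcv : c ≤ v) (hpos : 0 < μ (Ioc u c)) : intervalMean μ u c ≤ intervalMean μ u v := by
  have hL := setIntegral_Ioc_le_mul_measureReal hid u c
  have hR := mul_measureReal_Ioc_le_setIntegral hid c v
  have hDL := measureReal_Ioc_pos hpos
  have hDR : 0 ≤ μ.real (Ioc c v) := measureReal_nonneg
  rw [intervalMean, intervalMean, setIntegral_Ioc_add_Ioc hid huc hcv,
    measureReal_Ioc_add_Ioc huc hcv, div_le_div_iff₀ hDL (by positivity)]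
  nlinarith [mul_le_mul_of_nonneg_right hL hDR, mul_le_mul_of_nonneg_right hR hDL.le]

theorem intervalMean_mono {u₁ v₁ u₂ v₂ : ℝ} (hid : Integrable (fun ξ : ℝ => ξ) μ)
    (hcharge : ∀ ⦃s t⦄, u₁ ≤ s → s < t → t ≤ v₂ → 0 < μ (Ioc s t))
    (hu : u₁ ≤ u₂) (hv : v₁ ≤ v₂) (h₁ : u₁ < v₁) (h₂ : u₂ < v₂) :
    intervalMean μ u₁ v₁ ≤ intervalMean μ u₂ v₂ := by
  rcases lt_or_ge u₂ v₁ with h | h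
  · calc intervalMean μ u₁ v₁ ≤ intervalMean μ u₂ v₁ :=
          intervalMean_le_of_le_left hid hu h.le (hcharge hu h hv)
      _ ≤ intervalMean μ u₂ v₂ := intervalMean_le_of_le_right hid h.le hv (hcharge hu h hv)
  · calc intervalMean μ u₁ v₁ ≤ v₁ := (intervalMean_mem_Icc hid (hcharge le_rfl h₁ hv)).2
      _ ≤ u₂ := h
      _ ≤ intervalMean μ u₂ v₂ := (intervalMean_mem_Icc hid (hcharge hu h₂ le_rfl)).1

theorem measureReal_Iic_sub_Iic (huv : u ≤ v) :
    μ.real (Iic v) - μ.real (Iic u) = μ.real (Ioc u v) := by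
  rw [← Iic_union_Ioc_eq_Iic huv, measureReal_union (Iic_disjoint_Ioc le_rfl) measurableSet_Ioc,
    add_sub_cancel_left]

theorem intervalMean_eq_sub_div_sub (hid : Integrable (fun ξ : ℝ => ξ) μ) (huv : u ≤ v) :
    intervalMean μ u v =
      ((∫ ξ in Iic v, ξ ∂μ) - ∫ ξ in Iic u, ξ ∂μ) / (μ.real (Iic v) - μ.real (Iic u)) := by
  rw [intervalIntegral.integral_Iic_sub_Iic hid.integrableOn hid.integrableOn,
    intervalIntegral.integral_of_le huv, measureReal_Iic_sub_Iic huv, intervalMean]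

theorem continuous_measureReal_Iic [NullSingletonClass μ] : Continuous fun t => μ.real (Iic t) := by
  have h := continuous_setIntegral_Iic (integrable_const (1 : ℝ) : Integrable _ μ)
  simp only [setIntegral_const, smul_eq_mul, mul_one] at h
  exact h

end IntervalMean

theorem setIntegral_id_mul_mul_le_of_ratio_antitone {ν : Measure ℝ} [SFinite ν] {S : Set ℝ}
    (hS : MeasurableSet S) {f g : ℝ → ℝ} (hf : IntegrableOn f S ν) (hg : IntegrableOn g S ν)
    (hxf : IntegrableOn (fun x => x * f x) S ν) (hxg : IntegrableOn (fun x => x * g x) S ν)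
    (hfg : ∀ η ∈ S, ∀ ξ ∈ S, η ≤ ξ → g ξ * f η ≤ g η * f ξ) :
    (∫ x in S, x * g x ∂ν) * (∫ x in S, f x ∂ν) ≤ (∫ x in S, x * f x ∂ν) * ∫ x in S, g x ∂ν := by
  set ρ := ν.restrict S
  have hS2 : ∀ᵐ z ∂ρ.prod ρ, z.1 ∈ S ∧ z.2 ∈ S := by
    rw [Measure.prod_restrict]
    exact (ae_restrict_mem (hS.prod hS)).mono fun z hz => hz
  -- `(ξ - η) * (g ξ * f η - g η * f ξ) ≤ 0` on `S × S`; its integral over `ρ ⊗ ρ` is twice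
  -- the difference of the two sides
  have hle : ∫ z, ((z.1 * g z.1) * f z.2 + f z.1 * (z.2 * g z.2)) ∂ρ.prod ρ ≤
      ∫ z, ((z.1 * f z.1) * g z.2 + g z.1 * (z.2 * f z.2)) ∂ρ.prod ρ := by
    refine integral_mono_ae ((hxg.mul_prod hf).add (hf.mul_prod hxg))
      ((hxf.mul_prod hg).add (hg.mul_prod hxf)) (hS2.mono fun z ⟨h₁, h₂⟩ => ?_)
    rcases le_total z.2 z.1 with h | h
    · nlinarith [mul_nonneg (sub_nonneg.2 h) (sub_nonneg.2 (hfg _ h₂ _ h₁ h))]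
    · nlinarith [mul_nonneg (sub_nonneg.2 h) (sub_nonneg.2 (hfg _ h₁ _ h₂ h))]
  rw [integral_add ((hxg.mul_prod hf)) (hf.mul_prod hxg),
    integral_add (hxf.mul_prod hg) (hg.mul_prod hxf), integral_prod_mul (fun x => x * g x) f,
    integral_prod_mul f (fun x => x * g x), integral_prod_mul (fun x => x * f x) g,
    integral_prod_mul g (fun x => x * f x)] at hle
  linarith

theorem intervalMean_withDensity_ofReal {φ : ℝ → ℝ} {u v : ℝ} (huv : u ≤ v)
    (hcont : ContinuousOn φ (Icc u v)) (hφ : ∀ x ∈ Icc u v, 0 ≤ φ x) :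
    intervalMean (volume.withDensity fun x => ENNReal.ofReal (φ x)) u v =
      (∫ x in u..v, x * φ x) / ∫ x in u..v, φ x := by
  have key : ∀ g : ℝ → ℝ, ∫ x in Ioc u v, g x ∂(volume.withDensity fun x => ENNReal.ofReal (φ x))
      = ∫ x in Ioc u v, g x * φ x := fun g => by
    rw [setIntegral_withDensity_eq_setIntegral_toReal_smul₀' _
      ((hcont.mono Ioc_subset_Icc_self).aemeasurable measurableSet_Ioc).ennreal_ofReal
      (ae_of_all _ fun _ => ENNReal.ofReal_lt_top)]
    refine setIntegral_congr_fun measurableSet_Ioc fun x hx => ?_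
    rw [smul_eq_mul, ENNReal.toReal_ofReal (hφ x (Ioc_subset_Icc_self hx)), mul_comm]
  have hD := key 1
  simp only [Pi.one_apply, one_mul, setIntegral_const, smul_eq_mul, mul_one] at hD
  rw [intervalMean, key, hD, intervalIntegral.integral_of_le huv,
    intervalIntegral.integral_of_le huv]

theorem intervalMean_withDensity_ofReal_add_le {φ : ℝ → ℝ} {u v δ : ℝ} (huv : u < v)
    (hδ : 0 ≤ δ) (hpos : ∀ x ∈ Icc u (v + δ), 0 < φ x) (hcont : ContinuousOn φ (Icc u (v + δ)))
    (hconc : ConcaveOn ℝ (Icc u (v + δ)) fun x => log (φ x)) :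
    intervalMean (volume.withDensity fun x => ENNReal.ofReal (φ x)) (u + δ) (v + δ) ≤
      intervalMean (volume.withDensity fun x => ENNReal.ofReal (φ x)) u v + δ := by
  set g : ℝ → ℝ := fun x => φ (x + δ)
  have hshift : MapsTo (· + δ) (Icc u v) (Icc u (v + δ)) := fun x hx =>
    ⟨by linarith [hx.1], by linarith [hx.2]⟩
  have hφ : ContinuousOn φ (Icc u v) := hcont.mono (Icc_subset_Icc_right (by linarith))
  have hg : ContinuousOn g (Icc u v) := hcont.comp (by fun_prop) hshift
  have hxφ : ContinuousOn (fun x => x * φ x) (Icc u v) := (continuousOn_id' _).mul hφ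
  have hxg : ContinuousOn (fun x => x * g x) (Icc u v) := (continuousOn_id' _).mul hg
  have hint : ∀ h : ℝ → ℝ, ContinuousOn h (Icc u v) → IntegrableOn h (Ioc u v) := fun h hh =>
    hh.integrableOn_Icc.mono_set Ioc_subset_Icc_self
  have hratio : ∀ η ∈ Ioc u v, ∀ ξ ∈ Ioc u v, η ≤ ξ → g ξ * φ η ≤ g η * φ ξ :=
    fun η hη ξ hξ hηξ => map_add_mul_le_of_concaveOn_log hconc hpos
      ⟨hη.1.le, by linarith [hη.2]⟩ (hshift (Ioc_subset_Icc_self hξ)) hηξ hδ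
  have hcorr := setIntegral_id_mul_mul_le_of_ratio_antitone measurableSet_Ioc (hint φ hφ)
    (hint g hg) (hint _ hxφ) (hint _ hxg) hratio
  simp only [← intervalIntegral.integral_of_le huv.le] at hcorr
  have hIφ : 0 < ∫ x in u..v, φ x := intervalIntegral.intervalIntegral_pos_of_pos_on
    (hφ.intervalIntegrable_of_Icc huv.le) (fun x hx => hpos x ⟨hx.1.le, by linarith [hx.2]⟩) huv
  have hIg : 0 < ∫ x in u..v, g x := intervalIntegral.intervalIntegral_pos_of_pos_on
    (hg.intervalIntegrable_of_Icc huv.le) (fun x hx => hpos _ (hshift (Ioo_subset_Icc_self hx)))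
    huv
  have hmean_g : ∫ x in u..v, (x + δ) * g x = (∫ x in u..v, x * g x) + δ * ∫ x in u..v, g x := by
    simp_rw [add_mul]
    rw [intervalIntegral.integral_add (hxg.intervalIntegrable_of_Icc huv.le)
      ((hg.intervalIntegrable_of_Icc huv.le).const_mul δ), intervalIntegral.integral_const_mul]
  have hsub : Icc (u + δ) (v + δ) ⊆ Icc u (v + δ) := Icc_subset_Icc (by linarith) le_rfl
  have hshifted : intervalMean (volume.withDensity fun x => ENNReal.ofReal (φ x)) (u + δ) (v + δ)
      = (∫ x in u..v, x * g x) / (∫ x in u..v, g x) + δ := by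
    rw [intervalMean_withDensity_ofReal (by linarith) (hcont.mono hsub)
      fun x hx => (hpos x (hsub hx)).le,
      ← intervalIntegral.integral_comp_add_right (fun x => x * φ x),
      ← intervalIntegral.integral_comp_add_right φ, hmean_g, add_div, mul_div_assoc,
      div_self hIg.ne', mul_one]
  rw [hshifted, intervalMean_withDensity_ofReal huv.le hφ fun x hx => (hpos x
    (Icc_subset_Icc_right (by linarith) hx)).le, add_le_add_iff_right, div_le_div_iff₀ hIg hIφ]
  exact hcorr

theorem MonotoneOn.monotone_of_le_map {α : Type*} [Preorder α] {T : α → α} {s : Set α}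
    (hT : MonotoneOn T s) {x : ℕ → α} (hs : ∀ n, x n ∈ s) (hx : ∀ n, x (n + 1) = T (x n))
    (h01 : x 0 ≤ x 1) : Monotone x := by
  refine monotone_nat_of_le_succ fun n => ?_
  induction n with
  | zero => exact h01
  | succ n ih =>
    calc x (n + 1) = T (x n) := hx n
      _ ≤ T (x (n + 1)) := hT (hs n) (hs (n + 1)) ih
      _ = x (n + 1 + 1) := (hx (n + 1)).symm

theorem exists_isFixedPt_tendsto_of_monotoneOn {T : ℝ → ℝ} {a b : ℝ}
    (hmaps : MapsTo T (Icc a b) (Ioo a b)) (hmono : MonotoneOn T (Icc a b))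
    (hcont : ContinuousOn T (Icc a b)) {x : ℕ → ℝ} (hx0 : x 0 ∈ Icc a b)
    (hx : ∀ n, x (n + 1) = T (x n)) :
    ∃ c ∈ Ioo a b, Function.IsFixedPt T c ∧ Tendsto x atTop (𝓝 c) := by
  have hs : ∀ n, x n ∈ Icc a b := fun n => by
    induction n with
    | zero => exact hx0
    | succ n ih => rw [hx n]; exact Ioo_subset_Icc_self (hmaps ih)
  obtain ⟨c, hc⟩ : ∃ c, Tendsto x atTop (𝓝 c) := by
    rcases le_total (x 0) (x 1) with h | h
    · exact ⟨_, tendsto_atTop_ciSup (hmono.monotone_of_le_map hs hx h)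
        ⟨b, forall_mem_range.2 fun n => (hs n).2⟩⟩
    · exact ⟨_, tendsto_atTop_ciInf (hmono.dual.monotone_of_le_map (α := ℝᵒᵈ) hs hx h)
        ⟨a, forall_mem_range.2 fun n => (hs n).1⟩⟩
  have hcI : c ∈ Icc a b := isClosed_Icc.mem_of_tendsto hc (Eventually.of_forall hs)
  have hfix : Function.IsFixedPt T c := by
    refine tendsto_nhds_unique ((hcont c hcI).tendsto.comp
      (tendsto_nhdsWithin_iff.2 ⟨hc, Eventually.of_forall hs⟩)) ?_
    simpa only [Function.comp_def, ← hx] using hc.comp (tendsto_add_atTop_nat 1)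
  exact ⟨c, hfix.eq ▸ hmaps hcI, hfix, hc⟩

noncomputable def lloydMap (μ : Measure ℝ) (a b y : ℝ) : ℝ :=
  intervalMean μ ((a + y) / 2) ((b + y) / 2)

section LloydMap

variable {μ : Measure ℝ} [IsFiniteMeasure μ] {a b : ℝ}

theorem lloydMap_mem_Ioo [NullSingletonClass μ] (hid : Integrable (fun ξ : ℝ => ξ) μ)
    (hab : a < b) (hcharge : ∀ ⦃s t⦄, a ≤ s → s < t → t ≤ b → 0 < μ (Ioc s t)) :
    MapsTo (lloydMap μ a b) (Icc a b) (Ioo a b) := fun y hy => by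
  have h : lloydMap μ a b y ∈ Ioo ((a + y) / 2) ((b + y) / 2) :=
    intervalMean_mem_Ioo hid (hcharge (by linarith [hy.1]) (by linarith) (by linarith [hy.2]))
  exact ⟨by linarith [h.1, hy.1], by linarith [h.2, hy.2]⟩

theorem lloydMap_monotoneOn (hid : Integrable (fun ξ : ℝ => ξ) μ) (hab : a < b)
    (hcharge : ∀ ⦃s t⦄, a ≤ s → s < t → t ≤ b → 0 < μ (Ioc s t)) :
    MonotoneOn (lloydMap μ a b) (Icc a b) := fun y hy z hz hyz =>
  intervalMean_mono hid (fun _ _ hs hst ht => hcharge (by linarith [hy.1]) hst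
    (by linarith [hz.2])) (by linarith) (by linarith) (by linarith) (by linarith)

theorem continuousOn_lloydMap [NullSingletonClass μ] (hid : Integrable (fun ξ : ℝ => ξ) μ)
    (hab : a < b) (hcharge : ∀ ⦃s t⦄, a ≤ s → s < t → t ≤ b → 0 < μ (Ioc s t)) :
    ContinuousOn (lloydMap μ a b) (Icc a b) := by
  have hcell : ∀ y, (a + y) / 2 ≤ (b + y) / 2 := fun y => by linarith
  have hK := continuous_setIntegral_Iic hid
  have hF := continuous_measureReal_Iic (μ := μ)
  have hca : Continuous fun y : ℝ => (a + y) / 2 := by fun_prop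
  have hcb : Continuous fun y : ℝ => (b + y) / 2 := by fun_prop
  intro y hy
  refine ContinuousAt.continuousWithinAt ?_
  rw [show lloydMap μ a b = _ from funext fun y => intervalMean_eq_sub_div_sub hid (hcell y)]
  refine ContinuousAt.div ((hK.comp hcb).sub (hK.comp hca)).continuousAt
    ((hF.comp hcb).sub (hF.comp hca)).continuousAt ?_
  rw [measureReal_Iic_sub_Iic (hcell y)]
  exact (measureReal_Ioc_pos
    (hcharge (by linarith [hy.1]) (by linarith) (by linarith [hy.2]))).ne'

end LloydMap

theorem lloydMap_withDensity_ofReal_le_add {φ : ℝ → ℝ} {a b y z : ℝ}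
    (hpos : ∀ x ∈ Ioo a b, 0 < φ x) (hcont : ContinuousOn φ (Ioo a b))
    (hconc : ConcaveOn ℝ (Ioo a b) fun x => log (φ x)) (hy : y ∈ Ioo a b) (hz : z ∈ Ioo a b)
    (hyz : y ≤ z) :
    lloydMap (volume.withDensity fun x => ENNReal.ofReal (φ x)) a b z ≤
      lloydMap (volume.withDensity fun x => ENNReal.ofReal (φ x)) a b y + (z - y) / 2 := by
  have hsub : Icc ((a + y) / 2) ((b + y) / 2 + (z - y) / 2) ⊆ Ioo a b := fun x hx =>
    ⟨by linarith [hx.1, hy.1], by linarith [hx.2, hz.2]⟩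
  have h := intervalMean_withDensity_ofReal_add_le (by linarith [hy.1, hy.2])
    (by linarith) (fun x hx => hpos x (hsub hx)) (hcont.mono hsub) (hconc.subset hsub
      (convex_Icc _ _))
  rwa [show (a + y) / 2 + (z - y) / 2 = (a + z) / 2 by ring,
    show (b + y) / 2 + (z - y) / 2 = (b + z) / 2 by ring] at h

theorem eq_of_lloydMap_withDensity_ofReal_eq_self {φ : ℝ → ℝ} {a b y z : ℝ}
    (hpos : ∀ x ∈ Ioo a b, 0 < φ x) (hcont : ContinuousOn φ (Ioo a b))
    (hconc : ConcaveOn ℝ (Ioo a b) fun x => log (φ x)) (hy : y ∈ Ioo a b) (hz : z ∈ Ioo a b)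
    (hfy : lloydMap (volume.withDensity fun x => ENNReal.ofReal (φ x)) a b y = y)
    (hfz : lloydMap (volume.withDensity fun x => ENNReal.ofReal (φ x)) a b z = z) : y = z := by
  rcases le_total y z with h | h
  · linarith [lloydMap_withDensity_ofReal_le_add hpos hcont hconc hy hz h]
  · linarith [lloydMap_withDensity_ofReal_le_add hpos hcont hconc hz hy h]

theorem stmt_15_general (φ : ℝ → ℝ) (a b : ℝ) (hab : a < b)
    (hφpos : ∀ x ∈ Set.Ioo a b, 0 < φ x)
    (hlogconc : ∀ x ∈ Set.Icc a b, ∀ y ∈ Set.Icc a b, ∀ t ∈ Set.Icc (0 : ℝ) 1,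
      φ x ^ t * φ y ^ (1 - t) ≤ φ (t * x + (1 - t) * y))
    (μ : Measure ℝ) [IsProbabilityMeasure μ]
    (hμ : μ = MeasureTheory.volume.withDensity (fun x => ENNReal.ofReal (φ x)))
    (hmom : Integrable (fun x : ℝ => x ^ 2) μ)
    (Φ : ℝ → ℝ)
    (hΦ : ∀ y : ℝ, Φ y =
      ((∫ ξ in Set.Iic ((b + y) / 2), ξ ∂μ) - ∫ ξ in Set.Iic ((a + y) / 2), ξ ∂μ) /
        ((μ (Set.Iic ((b + y) / 2))).toReal - (μ (Set.Iic ((a + y) / 2))).toReal))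
    (x : ℕ → ℝ) (hx0 : x 0 ∈ Set.Ioo a b)
    (hiter : ∀ n : ℕ, x (n + 1) = Φ (x n)) :
    ∃ xs ∈ Set.Ioo a b, Φ xs = xs ∧ (∀ y ∈ Set.Ioo a b, Φ y = y → y = xs) ∧
      Tendsto x atTop (nhds xs) := by
  have hconc : ConcaveOn ℝ (Ioo a b) fun x => log (φ x) :=
    concaveOn_log_of_rpow_mul_rpow_le (convex_Ioo a b) hφpos fun x hx y hy =>
      hlogconc x (Ioo_subset_Icc_self hx) y (Ioo_subset_Icc_self hy)
  have hcont : ContinuousOn φ (Ioo a b) := continuousOn_of_concaveOn_log isOpen_Ioo hφpos hconc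
  have hid : Integrable (fun ξ : ℝ => ξ) μ :=
    ((memLp_two_iff_integrable_sq aestronglyMeasurable_id).2 hmom).integrable one_le_two
  subst hμ
  have hcharge : ∀ ⦃s t⦄, a ≤ s → s < t → t ≤ b →
      0 < volume.withDensity (fun x => ENNReal.ofReal (φ x)) (Ioc s t) := fun s t hs hst ht =>
    (withDensity_ofReal_Ioo_pos hst (fun x hx => hφpos x ⟨by linarith [hx.1], by linarith [hx.2]⟩)
      (hcont.mono (Ioo_subset_Ioo hs ht))).trans_le (measure_mono Ioo_subset_Ioc_self)
  obtain rfl : Φ = lloydMap _ a b :=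
    funext fun y => (hΦ y).trans (intervalMean_eq_sub_div_sub hid (by linarith)).symm
  obtain ⟨xs, hxs, hfix, hlim⟩ := exists_isFixedPt_tendsto_of_monotoneOn
    (lloydMap_mem_Ioo hid hab hcharge) (lloydMap_monotoneOn hid hab hcharge)
    (continuousOn_lloydMap hid hab hcharge) (Ioo_subset_Icc_self hx0) hiter
  exact ⟨xs, hxs, hfix, fun y hy hfy =>
    eq_of_lloydMap_withDensity_ofReal_eq_self hφpos hcont hconc hy hxs hfy hfix, hlim⟩

theorem stmt_15 (φ : ℝ → ℝ) (a b : ℝ) (hab : a < b)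
    (hφ0 : ∀ x, 0 ≤ φ x) (hφpos : ∀ x ∈ Set.Ioo a b, 0 < φ x)
    (hφsupp : ∀ x, x ∉ Set.Icc a b → φ x = 0)
    (hlogconc : ∀ x ∈ Set.Icc a b, ∀ y ∈ Set.Icc a b, ∀ t ∈ Set.Icc (0 : ℝ) 1,
      φ x ^ t * φ y ^ (1 - t) ≤ φ (t * x + (1 - t) * y))
    (μ : Measure ℝ) [IsProbabilityMeasure μ]
    (hμ : μ = MeasureTheory.volume.withDensity (fun x => ENNReal.ofReal (φ x)))
    (hmom : Integrable (fun x : ℝ => x ^ 2) μ)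
    (Φ : ℝ → ℝ)
    (hΦ : ∀ y : ℝ, Φ y =
      ((∫ ξ in Set.Iic ((b + y) / 2), ξ ∂μ) - ∫ ξ in Set.Iic ((a + y) / 2), ξ ∂μ) /
        ((μ (Set.Iic ((b + y) / 2))).toReal - (μ (Set.Iic ((a + y) / 2))).toReal))
    (x : ℕ → ℝ) (hx0 : x 0 ∈ Set.Ioo a b)
    (hiter : ∀ n : ℕ, x (n + 1) = Φ (x n)) :
    ∃ xs ∈ Set.Ioo a b, Φ xs = xs ∧ (∀ y ∈ Set.Ioo a b, Φ y = y → y = xs) ∧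
      Tendsto x atTop (nhds xs) :=
  stmt_15_general φ a b hab hφpos hlogconc μ hμ hmom Φ hΦ x hx0 hiter
end

section
/- Let X ∈ L^2(ℝ^d) with strongly continuous law μ (assigning zero mass to every hyperplane) with convex support, let a^{(N-1)} be a fixed finite set, and let (a_{[n]}) be the greedy Lloyd iteration a_{[n+1]} = E[X | X ∈ W_{[n]}], where W_{[n]} is the closed Voronoi cell of a_{[n]} in a^{(N-1)} ∪ {a_{[n]}}, started at a_{[0]} ∉ a^{(N-1)} in the support. Then the sequence G(a_{[n]}) = E[d(X, a^{(N-1)} ∪ {a_{[n]}})^2] is non-increasing, strictly decreasing at every non-stationary point, and converges to a finite limit ℓ² ≥ e_{2,N}(μ)². -/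
/-!
On the Voronoi cell `W` of the moving centre `c` the distance to the codebook `Γ ∪ {c}` is
`‖x - c‖`; off `W` it is the distance to `Γ`, which the new codebook `Γ ∪ {c'}` can only improve.
On `W`, the bias–variance identity `∫_W ‖x - c‖² = ∫_W ‖x - c'‖² + μ(W) ‖c' - c‖²` for the
barycentre `c'` of `W` gives a gain of `μ(W) ‖c' - c‖²`. Convexity of the support keeps every
barycentre in the support, so each cell has positive mass and the gain is positive unless
`c' = c`. The distortions thus form a non-increasing sequence of non-negative reals, each the
distortion of a codebook with at most `|Γ| + 1` points.
-/

open MeasureTheory Metric Filter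

/-- The support of a measure: points all of whose neighbourhoods have positive mass. -/
def measSupport {E : Type*} [MeasurableSpace E] [PseudoMetricSpace E] (μ : Measure E) : Set E :=
  {x | ∀ r : ℝ, 0 < r → 0 < μ (Metric.ball x r)}

open Topology Set
open scoped RealInnerProductSpace

lemma measSupport_eq_support {E : Type*} [MeasurableSpace E] [PseudoMetricSpace E]
    (μ : Measure E) : measSupport μ = μ.support := by
  ext x
  exact nhds_basis_ball.mem_measureSupport.symm

section Voronoi

variable {E : Type*} [MetricSpace E]

def voronoiCell (s : Set E) (c : E) : Set E :=
  {x | ∀ g ∈ s, dist x c ≤ dist x g}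

lemma isClosed_voronoiCell (s : Set E) (c : E) : IsClosed (voronoiCell s c) := by
  simp only [voronoiCell, ofPred_forall]
  exact isClosed_biInter fun g _ =>
    isClosed_le (continuous_id.dist continuous_const) (continuous_id.dist continuous_const)

lemma voronoiCell_mem_nhds {s : Set E} (hs : s.Finite) (c : E) : voronoiCell s c ∈ 𝓝 c := by
  refine (eventually_all_finite hs).2 fun g _ => ?_
  rcases eq_or_ne g c with rfl | hgc
  · exact Eventually.of_forall fun _ => le_rfl
  · have hcg : dist c c < dist c g := by simpa [dist_comm] using dist_pos.2 hgc
    exact ((continuous_id.dist continuous_const).continuousAt.eventually_lt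
      (continuous_id.dist continuous_const).continuousAt hcg).mono fun _ => le_of_lt

lemma infDist_insert_of_mem_voronoiCell {s : Set E} {c x : E} (hx : x ∈ voronoiCell s c) :
    infDist x (insert c s) = dist x c := by
  refine le_antisymm (infDist_le_dist_of_mem (mem_insert c s)) ?_
  rw [le_infDist (insert_nonempty c s)]
  rintro y (rfl | hy)
  exacts [le_rfl, hx y hy]

lemma infDist_insert_le_of_notMem_voronoiCell {s : Set E} {c x : E}
    (hx : x ∉ voronoiCell s c) (c' : E) : infDist x (insert c' s) ≤ infDist x (insert c s) := by
  obtain ⟨g, hg, hgx⟩ : ∃ g ∈ s, dist x g < dist x c := by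
    simpa [voronoiCell] using hx
  calc infDist x (insert c' s) ≤ infDist x s :=
        infDist_le_infDist_of_subset (subset_insert c' s) ⟨g, hg⟩
    _ ≤ infDist x (insert c s) := by
      rw [le_infDist (insert_nonempty c s)]
      rintro y (rfl | hy)
      exacts [(infDist_le_dist_of_mem hg).trans hgx.le, infDist_le_dist_of_mem hy]

end Voronoi

section Distortion

variable {E : Type*} [NormedAddCommGroup E]

lemma MeasureTheory.MemLp.integrable_norm_sub_sq {Ω : Type*} [MeasurableSpace Ω]
    {ν : Measure Ω} [IsFiniteMeasure ν] {f : Ω → E} (hf : MemLp f 2 ν) (b : E) :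
    Integrable (fun ω => ‖f ω - b‖ ^ 2) ν :=
  (hf.sub (memLp_const b)).integrable_norm_pow two_ne_zero

lemma integral_norm_sub_sq_eq_add [InnerProductSpace ℝ E] [CompleteSpace E] {Ω : Type*}
    [MeasurableSpace Ω] {ν : Measure Ω} [IsFiniteMeasure ν] {f : Ω → E} (hf : MemLp f 2 ν)
    (b : E) :
    ∫ ω, ‖f ω - b‖ ^ 2 ∂ν
      = ∫ ω, ‖f ω - ⨍ ω', f ω' ∂ν‖ ^ 2 ∂ν + ν.real univ * ‖(⨍ ω, f ω ∂ν) - b‖ ^ 2 := by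
  set m := ⨍ ω, f ω ∂ν
  have hdev : Integrable (fun ω => f ω - m) ν :=
    (hf.integrable one_le_two).sub (integrable_const m)
  have hlin : Integrable (fun ω => 2 * ⟪m - b, f ω - m⟫) ν :=
    (hdev.const_inner (m - b)).const_mul 2
  have hmean : ∫ ω, (f ω - m) ∂ν = 0 := by
    rw [integral_sub (hf.integrable one_le_two) (integrable_const m), integral_const,
      measure_smul_average, sub_self]
  have hsplit : ∀ ω, ‖f ω - b‖ ^ 2 = ‖f ω - m‖ ^ 2 + (2 * ⟪m - b, f ω - m⟫ + ‖m - b‖ ^ 2) := by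
    intro ω
    rw [show f ω - b = (f ω - m) + (m - b) by abel, norm_add_sq_real, real_inner_comm]
    ring
  calc ∫ ω, ‖f ω - b‖ ^ 2 ∂ν
      = ∫ ω, ‖f ω - m‖ ^ 2 ∂ν + (2 * ∫ ω, ⟪m - b, f ω - m⟫ ∂ν + ν.real univ * ‖m - b‖ ^ 2) := by
        simp_rw [hsplit]
        have hrest : Integrable (fun ω => 2 * ⟪m - b, f ω - m⟫ + ‖m - b‖ ^ 2) ν :=
          hlin.add (integrable_const _)
        rw [integral_add (hf.integrable_norm_sub_sq m) hrest,
          integral_add hlin (integrable_const _), integral_const_mul, integral_const, smul_eq_mul]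
    _ = ∫ ω, ‖f ω - m‖ ^ 2 ∂ν + ν.real univ * ‖m - b‖ ^ 2 := by
        rw [integral_inner hdev, hmean, inner_zero_right]
        ring

variable [MeasurableSpace E]

noncomputable def distortion (μ : Measure E) (S : Set E) : ℝ :=
  ∫ x, infDist x S ^ 2 ∂μ

lemma distortion_nonneg (μ : Measure E) (S : Set E) : 0 ≤ distortion μ S :=
  integral_nonneg fun _ => sq_nonneg _

variable [OpensMeasurableSpace E] {μ : Measure E} [IsFiniteMeasure μ]

lemma integrable_infDist_insert_sq (hX : MemLp (fun x => x) 2 μ) (s : Set E) (c : E) :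
    Integrable (fun x => infDist x (insert c s) ^ 2) μ := by
  refine (hX.integrable_norm_sub_sq c).mono'
    ((continuous_infDist_pt _).pow 2).aestronglyMeasurable (Eventually.of_forall fun x => ?_)
  rw [Real.norm_eq_abs, abs_of_nonneg (by positivity), ← dist_eq_norm]
  exact pow_le_pow_left₀ infDist_nonneg (infDist_le_dist_of_mem (mem_insert c s)) 2

theorem distortion_insert_setAverage_add_le [InnerProductSpace ℝ E] [CompleteSpace E]
    (hX : MemLp (fun x => x) 2 μ) (s : Set E) (c : E) :
    distortion μ (insert (⨍ y in voronoiCell s c, y ∂μ) s)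
      + μ.real (voronoiCell s c) * ‖(⨍ y in voronoiCell s c, y ∂μ) - c‖ ^ 2
      ≤ distortion μ (insert c s) := by
  set W := voronoiCell s c
  set c' := ⨍ y in W, y ∂μ
  have hW : MeasurableSet W := (isClosed_voronoiCell s c).measurableSet
  have hvar := integral_norm_sub_sq_eq_add (hX.restrict W) c
  rw [measureReal_restrict_apply_univ] at hvar
  have hin : ∫ x in W, infDist x (insert c' s) ^ 2 ∂μ ≤ ∫ x in W, ‖x - c'‖ ^ 2 ∂μ :=
    setIntegral_mono_on (integrable_infDist_insert_sq hX s c').integrableOn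
      (hX.integrable_norm_sub_sq c').integrableOn hW fun x _ => by
        rw [← dist_eq_norm]
        exact pow_le_pow_left₀ infDist_nonneg (infDist_le_dist_of_mem (mem_insert c' s)) 2
  have hout :
      ∫ x in Wᶜ, infDist x (insert c' s) ^ 2 ∂μ ≤ ∫ x in Wᶜ, infDist x (insert c s) ^ 2 ∂μ :=
    setIntegral_mono_on (integrable_infDist_insert_sq hX s c').integrableOn
      (integrable_infDist_insert_sq hX s c).integrableOn hW.compl fun x hx =>
        pow_le_pow_left₀ infDist_nonneg (infDist_insert_le_of_notMem_voronoiCell hx c') 2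
  have hcell : ∫ x in W, infDist x (insert c s) ^ 2 ∂μ = ∫ x in W, ‖x - c‖ ^ 2 ∂μ :=
    setIntegral_congr_fun hW fun x hx => by
      rw [infDist_insert_of_mem_voronoiCell hx, dist_eq_norm]
  unfold distortion
  rw [← integral_add_compl hW (integrable_infDist_insert_sq hX s c'),
    ← integral_add_compl hW (integrable_infDist_insert_sq hX s c), hcell, hvar]
  linarith

end Distortion

lemma measure_voronoiCell_pos {E : Type*} [MetricSpace E] [MeasurableSpace E] {μ : Measure E}
    {s : Set E} (hs : s.Finite) {c : E} (hc : c ∈ μ.support) : 0 < μ (voronoiCell s c) :=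
  (Measure.mem_support_iff_forall c).1 hc _ (voronoiCell_mem_nhds hs c)

lemma setAverage_voronoiCell_mem_support {E : Type*} [NormedAddCommGroup E] [NormedSpace ℝ E]
    [CompleteSpace E] [SecondCountableTopology E] [MeasurableSpace E] [OpensMeasurableSpace E]
    {μ : Measure E} [IsFiniteMeasure μ] (hconv : Convex ℝ μ.support)
    (hX : Integrable (fun x => x) μ) {s : Set E} (hs : s.Finite) {c : E} (hc : c ∈ μ.support) :
    ⨍ x in voronoiCell s c, x ∂μ ∈ μ.support :=
  hconv.set_average_mem Measure.isClosed_support (measure_voronoiCell_pos hs hc).ne'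
    (measure_ne_top μ _) (ae_restrict_of_ae Measure.support_mem_ae) hX.integrableOn

theorem stmt_16_general {d : ℕ}
    (μ : Measure (EuclideanSpace ℝ (Fin d))) [IsProbabilityMeasure μ]
    (hL2 : Integrable (fun x => ‖x‖ ^ 2) μ)
    (hconv : Convex ℝ (measSupport μ))
    (Γ : Finset (EuclideanSpace ℝ (Fin d)))
    (a : ℕ → EuclideanSpace ℝ (Fin d))
    (ha0 : a 0 ∈ measSupport μ ∧ a 0 ∉ Γ)
    (W : ℕ → Set (EuclideanSpace ℝ (Fin d)))
    (hW : ∀ n, W n = {x | ∀ g ∈ Γ, ‖x - a n‖ ≤ ‖x - g‖})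
    (hiter : ∀ n, a (n + 1) = (μ (W n)).toReal⁻¹ • ∫ x in W n, x ∂μ) :
    let G : ℕ → ℝ := fun n =>
      ∫ x, infDist x (insert (a n) (↑Γ : Set (EuclideanSpace ℝ (Fin d)))) ^ 2 ∂μ
    (∀ n, G (n + 1) ≤ G n) ∧
    (∀ n, a n ≠ (μ (W n)).toReal⁻¹ • ∫ x in W n, x ∂μ → G (n + 1) < G n) ∧
    ∃ ℓ : ℝ, Tendsto G atTop (nhds ℓ) ∧
      sInf {v : ℝ | ∃ S : Finset (EuclideanSpace ℝ (Fin d)), S.Nonempty ∧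
          S.card ≤ Γ.card + 1 ∧
          v = ∫ x, infDist x (↑S : Set (EuclideanSpace ℝ (Fin d))) ^ 2 ∂μ} ≤ ℓ := by
  intro G
  have hX : MemLp (fun x => x) 2 μ :=
    (memLp_two_iff_integrable_sq_norm continuous_id.aestronglyMeasurable).2 hL2
  have hcell : ∀ n, W n = voronoiCell Γ (a n) := fun n => by
    simp only [hW, voronoiCell, dist_eq_norm, Finset.mem_coe]
  have hstep : ∀ n, a (n + 1) = ⨍ x in W n, x ∂μ := fun n => by
    rw [hiter, setAverage_eq, Measure.real]
  rw [measSupport_eq_support] at hconv ha0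
  have hsupp : ∀ n, a n ∈ μ.support := fun n => by
    induction n with
    | zero => exact ha0.1
    | succ n ih =>
      rw [hstep, hcell]
      exact setAverage_voronoiCell_mem_support hconv (hX.integrable one_le_two) Γ.finite_toSet ih
  have hdesc : ∀ n, G (n + 1) + μ.real (W n) * ‖a (n + 1) - a n‖ ^ 2 ≤ G n := fun n => by
    have h := distortion_insert_setAverage_add_le hX Γ (a n)
    rw [← hcell, ← hstep] at h
    exact h
  have hmono : ∀ n, G (n + 1) ≤ G n := fun n =>
    (le_add_of_nonneg_right (by positivity)).trans (hdesc n)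
  have hbdd : BddBelow (range G) := ⟨0, by rintro _ ⟨n, rfl⟩; exact distortion_nonneg _ _⟩
  refine ⟨hmono, fun n hn => ?_, ⨅ n, G n,
    tendsto_atTop_ciInf (antitone_nat_of_succ_le hmono) hbdd, ?_⟩
  · have hmass : 0 < μ.real (W n) := by
      rw [hcell]
      exact ENNReal.toReal_pos (measure_voronoiCell_pos Γ.finite_toSet (hsupp n)).ne'
        (measure_ne_top μ _)
    have hmove : a (n + 1) ≠ a n := fun h => hn (by rw [← h, hiter])
    have hgain : 0 < μ.real (W n) * ‖a (n + 1) - a n‖ ^ 2 :=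
      mul_pos hmass (pow_pos (norm_pos_iff.2 (sub_ne_zero.2 hmove)) 2)
    exact (lt_add_of_pos_right _ hgain).trans_le (hdesc n)
  · classical
    refine le_ciInf fun n => csInf_le ⟨0, ?_⟩ ⟨insert (a n) Γ, Finset.insert_nonempty _ _,
      Finset.card_insert_le _ _, by rw [Finset.coe_insert]⟩
    rintro _ ⟨S, -, -, rfl⟩
    exact distortion_nonneg _ _

theorem stmt_16 {d : ℕ}
    (μ : Measure (EuclideanSpace ℝ (Fin d))) [IsProbabilityMeasure μ]
    (hL2 : Integrable (fun x => ‖x‖ ^ 2) μ)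
    (hcont : ∀ (v : EuclideanSpace ℝ (Fin d)) (c : ℝ), v ≠ 0 →
      μ {x | (inner ℝ v x : ℝ) = c} = 0)
    (hconv : Convex ℝ (measSupport μ))
    (Γ : Finset (EuclideanSpace ℝ (Fin d)))
    (a : ℕ → EuclideanSpace ℝ (Fin d))
    (ha0 : a 0 ∈ measSupport μ ∧ a 0 ∉ Γ)
    (W : ℕ → Set (EuclideanSpace ℝ (Fin d)))
    (hW : ∀ n, W n = {x | ∀ g ∈ Γ, ‖x - a n‖ ≤ ‖x - g‖})
    (hiter : ∀ n, a (n + 1) = (μ (W n)).toReal⁻¹ • ∫ x in W n, x ∂μ) :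
    let G : ℕ → ℝ := fun n =>
      ∫ x, infDist x (insert (a n) (↑Γ : Set (EuclideanSpace ℝ (Fin d)))) ^ 2 ∂μ
    (∀ n, G (n + 1) ≤ G n) ∧
    (∀ n, a n ≠ (μ (W n)).toReal⁻¹ • ∫ x in W n, x ∂μ → G (n + 1) < G n) ∧
    ∃ ℓ : ℝ, Tendsto G atTop (nhds ℓ) ∧
      sInf {v : ℝ | ∃ S : Finset (EuclideanSpace ℝ (Fin d)), S.Nonempty ∧
          S.card ≤ Γ.card + 1 ∧
          v = ∫ x, infDist x (↑S : Set (EuclideanSpace ℝ (Fin d))) ^ 2 ∂μ} ≤ ℓ :=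
  stmt_16_general μ hL2 hconv Γ a ha0 W hW hiter
end
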